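/- Let a, b, c be nonzero elements of a field K of characteristic zero equipped with a derivation D, with a + b + c = 0. Define the logarithmic derivative L(x) = D(x)/x for x ≠ 0, extended to quotients. If b/c is not a constant (i.e., D(b/c) ≠ 0), then the vectors (a, b, c) and (L(b/c), L(c/a), L(a/b)) are proportional: a·L(c/a) = b·L(b/c), b·L(a/b) = c·L(c/a), and c·L(b/c) = a·L(a/b). -/

import Mathlib

/-- Height-to-radical identity in a differential field: if `a + b + c = 0`
with `a, b, c` nonzero and `b/c` nonconstant, then `(a, b, c)` is
proportional to `(L(b/c), L(c/a), L(a/b))`, where `L` is the logarithmic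
derivative: all cross products of coordinates agree. -/
theorem abc_proportional_logDeriv (K : Type*) [Field K] [CharZero K] (D : K → K)
    (hadd : ∀ x y : K, D (x + y) = D x + D y)
    (hmul : ∀ x y : K, D (x * y) = x * D y + y * D x)
    (L : K → K) (hL : ∀ x : K, L x = D x / x)
    (a b c : K) (ha : a ≠ 0) (hb : b ≠ 0) (hc : c ≠ 0)
    (habc : a + b + c = 0) (hnc : D (b / c) ≠ 0) :
    a * L (c / a) = b * L (b / c) ∧
    b * L (a / b) = c * L (c / a) ∧
    c * L (b / c) = a * L (a / b) := by
  have h0 : D 0 = 0 := by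
    have h := hadd 0 0
    rw [add_zero] at h
    exact (left_eq_add.mp h)
  have hLq : ∀ x y : K, x ≠ 0 → y ≠ 0 → L (x / y) = D x / x - D y / y := by
    intro x y hx hy
    have h1 := hmul (x / y) y
    rw [div_mul_cancel₀ _ hy] at h1
    rw [hL]
    field_simp at h1 ⊢
    linear_combination -h1
  have hsum : D a + D b + D c = 0 := by
    have h1 := hadd (a + b) c
    have h2 := hadd a b
    rw [habc, h0, h2] at h1
    linear_combination -h1
  rw [hLq _ _ hc ha, hLq _ _ hb hc, hLq _ _ ha hb]
  have hDc : D c = -D a - D b := by linear_combination hsum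
  have hc2 : c = -a - b := by linear_combination habc
  refine ⟨?_, ?_, ?_⟩ <;> field_simp <;> rw [hDc, hc2] <;> ring
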